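/- Let H be a symmetric positive definite real n×n matrix with n ≥ 2, let K := H⁻¹, let w : Fin n → ℝ, and let p ≠ q be two indices. Perform two sequential exact OBS steps: first set w¹ := w − ((w p) / (K p p)) • (fun i => K i p) and K' := K − (1 / K p p) • (fun i j => K i p * K p j); then set w² := w¹ − ((w¹ q) / (K' q q)) • (fun i => K' i q). Then K' q q > 0, the vector w² satisfies w² p = 0 and w² q = 0, and w² is the unique minimizer of the quadratic (v − w) ⬝ᵥ (H *ᵥ (v − w)) over all v : Fin n → ℝ with v p = 0 and v q = 0. That is, pruning one weight at a time with the exact OBS update and the Gaussian-elimination update of the inverse Hessian yields the same result as jointly optimally pruning the set {p, q}. -/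

import Mathlib

/-!
After both steps, `w2 - w` is a combination of the columns `p` and `q` of `K = H⁻¹` (the column
`q` of `K'` is `K.col q - (K p q / K p p) • K.col p`), so the gradient `H (w2 - w)` is supported on
`{p, q}`. Together with `w2 p = w2 q = 0` these are the optimality conditions of the constrained
quadratic problem: for every feasible `v` the cross term vanishes and
`Q (v - w) = Q (v - w2) + Q (w2 - w)`, which gives minimality and, by positive definiteness,
uniqueness. The pivot `K' q q` is the Schur complement of `K p p` in the principal `2 × 2` block of
`K` on `{p, q}`, hence positive.
-/

open Matrix

namespace Matrix

variable {ι R : Type*}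

section Field
variable [Field R]

/-- The OBS prune-and-update of weight `p`, with `K` the inverse Hessian. -/
def obsPrune (K : Matrix ι ι R) (w : ι → R) (p : ι) : ι → R :=
  w - (w p / K p p) • K.col p

/-- The updated inverse Hessian `K'` of the Row & Column Removal lemma: Gaussian elimination with
pivot `K p p`. -/
def eliminate (K : Matrix ι ι R) (p : ι) : Matrix ι ι R :=
  K - (1 / K p p) • of fun i j => K i p * K p j

variable {K H : Matrix ι ι R} {w : ι → R} {p : ι}

theorem obsPrune_apply_self (hp : K p p ≠ 0) : obsPrune K w p p = 0 := by
  simp [obsPrune, hp]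

theorem obsPrune_apply_of_eq_zero {i : ι} (h : K i p = 0) : obsPrune K w p i = w i := by
  simp [obsPrune, h]

theorem eliminate_apply_self_left (hp : K p p ≠ 0) (j : ι) : eliminate K p p j = 0 := by
  simp [eliminate, hp]

theorem col_eliminate (j : ι) :
    (eliminate K p).col j = K.col j - (K p j / K p p) • K.col p := by
  ext i
  simp only [eliminate, col_apply, sub_apply, smul_apply, of_apply, Pi.sub_apply,
    Pi.smul_apply, smul_eq_mul]
  ring

variable [Fintype ι]

theorem mulVec_obsPrune_sub :
    H *ᵥ (obsPrune K w p - w) = -(w p / K p p) • H *ᵥ K.col p := by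
  rw [obsPrune, sub_sub_cancel_left, neg_smul, mulVec_neg, mulVec_smul]

variable [DecidableEq ι]

theorem mulVec_col_of_mul_eq_one (hHK : H * K = 1) (j : ι) :
    H *ᵥ K.col j = Pi.single j 1 := by
  rw [← mulVec_single_one, mulVec_mulVec, hHK, one_mulVec]

theorem mulVec_col_eliminate_of_mul_eq_one (hHK : H * K = 1) (j : ι) :
    H *ᵥ (eliminate K p).col j = Pi.single j 1 - (K p j / K p p) • Pi.single p 1 := by
  rw [col_eliminate, mulVec_sub, mulVec_smul, mulVec_col_of_mul_eq_one hHK,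
    mulVec_col_of_mul_eq_one hHK]

end Field

section CommRing
variable [CommRing R] [Fintype ι] {H : Matrix ι ι R}

theorem IsSymm.dotProduct_mulVec_comm (hH : H.IsSymm) (u v : ι → R) :
    u ⬝ᵥ H *ᵥ v = v ⬝ᵥ H *ᵥ u := by
  rw [dotProduct_mulVec, ← mulVec_transpose, hH.eq, dotProduct_comm]

theorem IsSymm.dotProduct_mulVec_add_self (hH : H.IsSymm) (u v : ι → R) :
    (u + v) ⬝ᵥ H *ᵥ (u + v) = u ⬝ᵥ H *ᵥ u + v ⬝ᵥ H *ᵥ v + 2 * (u ⬝ᵥ H *ᵥ v) := by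
  rw [add_dotProduct, mulVec_add, dotProduct_add, dotProduct_add,
    hH.dotProduct_mulVec_comm v u]
  ring

variable {s : Set ι} {x w : ι → R}

theorem dotProduct_eq_zero_of_support {u g : ι → R} (hu : ∀ i ∈ s, u i = 0)
    (hg : ∀ i ∉ s, g i = 0) : u ⬝ᵥ g = 0 :=
  Finset.sum_eq_zero fun i _ => by
    by_cases hi : i ∈ s <;> simp [hu, hg, hi]

theorem quadForm_sub_eq_add_of_support (hH : H.IsSymm) (hx : ∀ i ∈ s, x i = 0)
    (hgrad : ∀ i ∉ s, (H *ᵥ (x - w)) i = 0) {v : ι → R} (hv : ∀ i ∈ s, v i = 0) :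
    (v - w) ⬝ᵥ H *ᵥ (v - w) = (v - x) ⬝ᵥ H *ᵥ (v - x) + (x - w) ⬝ᵥ H *ᵥ (x - w) := by
  have horth : (v - x) ⬝ᵥ H *ᵥ (x - w) = 0 :=
    dotProduct_eq_zero_of_support (fun i hi => by simp [hv i hi, hx i hi]) hgrad
  rw [← sub_add_sub_cancel v x w, hH.dotProduct_mulVec_add_self, horth]
  ring

end CommRing

theorem PosDef.isSymm {K : Matrix ι ι ℝ} (hK : K.PosDef) : K.IsSymm :=
  isHermitian_iff_isSymm.mp hK.isHermitian

theorem PosDef.eliminate_apply_self_pos {K : Matrix ι ι ℝ} (hK : K.PosDef) {p i : ι}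
    (hip : i ≠ p) : 0 < eliminate K p i i := by
  have hpi : Function.Injective ![p, i] := by
    intro a b; fin_cases a <;> fin_cases b <;> simp [hip, hip.symm]
  have hdet := (hK.submatrix hpi).det_pos
  have hsymm : K i p = K p i := hK.isSymm.apply p i
  have hpp := hK.diag_pos (i := p)
  rw [det_fin_two] at hdet
  simp only [submatrix_apply, cons_val_zero, cons_val_one, hsymm] at hdet
  simp only [eliminate, sub_apply, smul_apply, of_apply, smul_eq_mul, hsymm]
  rw [one_div_mul_eq_div, sub_pos, div_lt_iff₀ hpp]
  linarith

section Real
variable [Fintype ι] {H : Matrix ι ι ℝ} {s : Set ι} {x w : ι → ℝ}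

theorem PosDef.quadForm_sub_le_of_support (hH : H.PosDef) (hx : ∀ i ∈ s, x i = 0)
    (hgrad : ∀ i ∉ s, (H *ᵥ (x - w)) i = 0) {v : ι → ℝ} (hv : ∀ i ∈ s, v i = 0) :
    (x - w) ⬝ᵥ H *ᵥ (x - w) ≤ (v - w) ⬝ᵥ H *ᵥ (v - w) := by
  rw [quadForm_sub_eq_add_of_support hH.isSymm hx hgrad hv, le_add_iff_nonneg_left]
  simpa using hH.posSemidef.dotProduct_mulVec_nonneg (v - x)

theorem PosDef.eq_of_quadForm_sub_eq (hH : H.PosDef) (hx : ∀ i ∈ s, x i = 0)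
    (hgrad : ∀ i ∉ s, (H *ᵥ (x - w)) i = 0) {v : ι → ℝ} (hv : ∀ i ∈ s, v i = 0)
    (heq : (v - w) ⬝ᵥ H *ᵥ (v - w) = (x - w) ⬝ᵥ H *ᵥ (x - w)) : v = x := by
  rw [quadForm_sub_eq_add_of_support hH.isSymm hx hgrad hv, add_eq_right] at heq
  by_contra hne
  simpa [heq] using hH.dotProduct_mulVec_pos (sub_ne_zero.mpr hne)

end Real

end Matrix

theorem exact_obs_two_sequential_steps_general (n : ℕ)
    (H : Matrix (Fin n) (Fin n) ℝ) (hH : H.PosDef)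
    (w : Fin n → ℝ) (p q : Fin n) (hpq : p ≠ q)
    (w1 : Fin n → ℝ)
    (hw1 : w1 = w - ((w p) / (H⁻¹ p p)) • (fun i => H⁻¹ i p))
    (K' : Matrix (Fin n) (Fin n) ℝ)
    (hK' : K' = H⁻¹ - (1 / H⁻¹ p p) • Matrix.of (fun i j => H⁻¹ i p * H⁻¹ p j))
    (w2 : Fin n → ℝ)
    (hw2 : w2 = w1 - ((w1 q) / (K' q q)) • (fun i => K' i q)) :
    0 < K' q q ∧ w2 p = 0 ∧ w2 q = 0 ∧
      (∀ v : Fin n → ℝ, v p = 0 → v q = 0 →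
        (w2 - w) ⬝ᵥ (H *ᵥ (w2 - w)) ≤ (v - w) ⬝ᵥ (H *ᵥ (v - w))) ∧
      (∀ v : Fin n → ℝ, v p = 0 → v q = 0 →
        (v - w) ⬝ᵥ (H *ᵥ (v - w)) = (w2 - w) ⬝ᵥ (H *ᵥ (w2 - w)) → v = w2) := by
  set K := H⁻¹
  have hK : K.PosDef := hH.inv
  have hHK : H * K = 1 := H.mul_nonsing_inv ((isUnit_iff_isUnit_det H).mp hH.isUnit)
  have hpp : K p p ≠ 0 := hK.diag_pos.ne'
  change w1 = obsPrune K w p at hw1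
  change K' = eliminate K p at hK'
  change w2 = obsPrune K' w1 q at hw2
  subst hK'
  have hqq : 0 < eliminate K p q q := hK.eliminate_apply_self_pos hpq.symm
  have hpruned : ∀ i ∈ ({p, q} : Set (Fin n)), w2 i = 0 := by
    rintro i (rfl | rfl) <;> rw [hw2]
    · rw [obsPrune_apply_of_eq_zero (eliminate_apply_self_left hpp q), hw1,
        obsPrune_apply_self hpp]
    · exact obsPrune_apply_self hqq.ne'
  have hgrad : ∀ i ∉ ({p, q} : Set (Fin n)), (H *ᵥ (w2 - w)) i = 0 := by
    intro i hi
    rw [← sub_add_sub_cancel w2 w1 w, mulVec_add, hw2, mulVec_obsPrune_sub, hw1,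
      mulVec_obsPrune_sub, mulVec_col_eliminate_of_mul_eq_one hHK, mulVec_col_of_mul_eq_one hHK]
    simp only [Set.mem_insert_iff, Set.mem_singleton_iff, not_or] at hi
    simp [hi.1, hi.2]
  have hvanish : ∀ v : Fin n → ℝ, v p = 0 → v q = 0 → ∀ i ∈ ({p, q} : Set (Fin n)), v i = 0 := by
    rintro v hvp hvq i (rfl | rfl) <;> assumption
  exact ⟨hqq, hpruned p (by simp), hpruned q (by simp),
    fun v hvp hvq => hH.quadForm_sub_le_of_support hpruned hgrad (hvanish v hvp hvq),
    fun v hvp hvq => hH.eq_of_quadForm_sub_eq hpruned hgrad (hvanish v hvp hvq)⟩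

/-- Two sequential exact OBS steps (prune weight `p`, update the inverse Hessian by
Gaussian elimination, then prune weight `q`) yield exactly the joint optimal
pruning of the set `{p, q}`: the resulting weights `w2` vanish at `p` and `q` and
are the unique minimizer of `(v − w)ᵀ H (v − w)` over all `v` with
`v p = 0` and `v q = 0`; moreover `K' q q > 0`. -/
theorem exact_obs_two_sequential_steps (n : ℕ) (hn : 2 ≤ n)
    (H : Matrix (Fin n) (Fin n) ℝ) (hH : H.PosDef)
    (w : Fin n → ℝ) (p q : Fin n) (hpq : p ≠ q)
    (w1 : Fin n → ℝ)
    (hw1 : w1 = w - ((w p) / (H⁻¹ p p)) • (fun i => H⁻¹ i p))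
    (K' : Matrix (Fin n) (Fin n) ℝ)
    (hK' : K' = H⁻¹ - (1 / H⁻¹ p p) • Matrix.of (fun i j => H⁻¹ i p * H⁻¹ p j))
    (w2 : Fin n → ℝ)
    (hw2 : w2 = w1 - ((w1 q) / (K' q q)) • (fun i => K' i q)) :
    0 < K' q q ∧ w2 p = 0 ∧ w2 q = 0 ∧
      (∀ v : Fin n → ℝ, v p = 0 → v q = 0 →
        (w2 - w) ⬝ᵥ (H *ᵥ (w2 - w)) ≤ (v - w) ⬝ᵥ (H *ᵥ (v - w))) ∧
      (∀ v : Fin n → ℝ, v p = 0 → v q = 0 →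
        (v - w) ⬝ᵥ (H *ᵥ (v - w)) = (w2 - w) ⬝ᵥ (H *ᵥ (w2 - w)) → v = w2) :=
  exact_obs_two_sequential_steps_general n H hH w p q hpq w1 hw1 K' hK' w2 hw2
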